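/- arXiv:1211.3508 — 7 statements merged into one kernel-verified Lean document; each statement's English description precedes it below -/
import Mathlib

section
/- Let p be a prime, n a positive integer with p ∣ n, and f ∈ ℤ[x₁,…,x_k]. Then f(x₁^p,…,x_k^p)^(n/p) ≡ f(x₁,…,x_k)^n modulo p^(ord_p n), where ord_p n is the exponent of p in n. -/
/-!
Modulo `p`, Frobenius gives `f(x₁^p, …, x_k^p) ≡ f^p`. A congruence `a ≡ b [p]` lifts to
`a^(p^j) ≡ b^(p^j) [p^(j+1)]`, so raising both sides to the power `n / p`, whose `p`-adic
valuation is `ord_p n - 1`, yields the congruence modulo `p^(ord_p n)`.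
-/

open MvPolynomial

theorem MvPolynomial.natCast_dvd_expand_sub_pow {σ : Type*} (p : ℕ) [Fact p.Prime]
    (f : MvPolynomial σ ℤ) : (p : MvPolynomial σ ℤ) ∣ expand p f - f ^ p := by
  rw [← C_eq_coe_nat, C_dvd_iff_zmod, map_sub, sub_eq_zero, map_expand, map_pow, expand_zmod]

theorem natCast_pow_factorization_succ_dvd_pow_sub_pow {R : Type*} [CommRing R] {p : ℕ}
    {a b : R} (h : (p : R) ∣ a - b) (n : ℕ) :
    (p : R) ^ (n.factorization p + 1) ∣ a ^ n - b ^ n := by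
  set e := n.factorization p
  obtain ⟨m, hm⟩ := Nat.ordProj_dvd n p
  have hpow : a ^ n - b ^ n = (a ^ p ^ e) ^ m - (b ^ p ^ e) ^ m := by
    rw [← pow_mul, ← pow_mul, ← hm]
  rw [hpow]
  exact (dvd_sub_pow_of_dvd_sub h _).trans (sub_dvd_pow_sub_pow _ _ m)

theorem stmt_1_general (p : ℕ) (hp : p.Prime) (n : ℕ) (hpn : p ∣ n)
    (k : ℕ) (f : MvPolynomial (Fin k) ℤ) :
    ((p : MvPolynomial (Fin k) ℤ)) ^ (n.factorization p) ∣
      (MvPolynomial.aeval (fun i => MvPolynomial.X i ^ p) f) ^ (n / p) - f ^ n := by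
  have : Fact p.Prime := ⟨hp⟩
  have hval : n.factorization p ≤ (n / p).factorization p + 1 := by
    rw [Nat.factorization_div hpn, Finsupp.tsub_apply, hp.factorization_self]
    omega
  have hfn : f ^ n = (f ^ p) ^ (n / p) := by rw [← pow_mul, Nat.mul_div_cancel' hpn]
  rw [hfn]
  exact (pow_dvd_pow _ hval).trans
    (natCast_pow_factorization_succ_dvd_pow_sub_pow (natCast_dvd_expand_sub_pow p f) _)

theorem stmt_1 (p : ℕ) (hp : p.Prime) (n : ℕ) (hn : 0 < n) (hpn : p ∣ n)
    (k : ℕ) (f : MvPolynomial (Fin k) ℤ) :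
    ((p : MvPolynomial (Fin k) ℤ)) ^ (n.factorization p) ∣
      (MvPolynomial.aeval (fun i => MvPolynomial.X i ^ p) f) ^ (n / p) - f ^ n :=
  stmt_1_general p hp n hpn k f
end

section
/- Let p be a prime, n a positive integer with p ∣ n, m an integer, and d a divisor of n with d ∣ (n/p). Then d·(1 − m^(n/d)) ≡ d·(1 − m^(n/(p·d))) modulo p^(ord_p n). -/
/-! Write `n = p d c`. Then `n / d = p c` and `n / (p d) = c`, so the difference of the two sides is
`d (m ^ (p c) - m ^ c)`. Fermat's little theorem for `m ^ s`, lifted along `c = p ^ t s`, gives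
`p ^ (t + 1) ∣ m ^ (p c) - m ^ c`, while `p ^ (ord_p d) ∣ d`; and `ord_p n = ord_p d + t + 1`. -/

theorem Int.prime_pow_dvd_pow_mul_sub_pow {p : ℕ} (hp : p.Prime) (m : ℤ) (c : ℕ) :
    (p : ℤ) ^ (c.factorization p + 1) ∣ m ^ (p * c) - m ^ c := by
  obtain ⟨s, hs⟩ := Nat.ordProj_dvd c p
  have h := dvd_sub_pow_of_dvd_sub (Int.prime_dvd_pow_self_sub hp (m ^ s)) (c.factorization p)
  rwa [← pow_mul, ← pow_mul, ← pow_mul, mul_left_comm, mul_comm s, ← hs] at h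

theorem Nat.factorization_prime_mul_mul {p d c : ℕ} (hp : p.Prime) (hd : d ≠ 0) (hc : c ≠ 0) :
    (p * d * c).factorization p = d.factorization p + c.factorization p + 1 := by
  rw [Nat.factorization_mul (mul_ne_zero hp.ne_zero hd) hc, Nat.factorization_mul hp.ne_zero hd]
  simp only [Finsupp.add_apply, hp.factorization_self]
  ring

theorem Int.prime_pow_factorization_dvd_mul_pow_mul_sub_pow {p d c : ℕ} (hp : p.Prime)
    (hd : d ≠ 0) (hc : c ≠ 0) (m : ℤ) :
    (p : ℤ) ^ (p * d * c).factorization p ∣ d * (m ^ (p * c) - m ^ c) := by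
  rw [Nat.factorization_prime_mul_mul hp hd hc, add_assoc, pow_add]
  exact mul_dvd_mul (mod_cast Nat.ordProj_dvd d p) (Int.prime_pow_dvd_pow_mul_sub_pow hp m c)

theorem stmt_2_general (p : ℕ) (hp : p.Prime) (n : ℕ) (hn : 0 < n) (hpn : p ∣ n)
    (m : ℤ) (d : ℕ) (hd' : d ∣ n / p) :
    (d : ℤ) * (1 - m ^ (n / d)) ≡ (d : ℤ) * (1 - m ^ (n / (p * d)))
      [ZMOD (p : ℤ) ^ (n.factorization p)] := by
  obtain ⟨c, hc⟩ := hd'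
  have hn_eq : n = p * d * c := by rw [mul_assoc, ← hc, Nat.mul_div_cancel' hpn]
  have hd0 : d ≠ 0 := by rintro rfl; simp [hn_eq] at hn
  have hc0 : c ≠ 0 := by rintro rfl; simp [hn_eq] at hn
  have hnd : n / d = p * c := by
    rw [hn_eq, mul_right_comm, Nat.mul_div_cancel _ (Nat.pos_of_ne_zero hd0)]
  have hnpd : n / (p * d) = c := by
    rw [hn_eq, Nat.mul_div_cancel_left _ (Nat.mul_pos hp.pos (Nat.pos_of_ne_zero hd0))]
  rw [hnd, hnpd, Int.modEq_iff_dvd, hn_eq]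
  convert Int.prime_pow_factorization_dvd_mul_pow_mul_sub_pow hp hd0 hc0 m using 1
  ring

theorem stmt_2 (p : ℕ) (hp : p.Prime) (n : ℕ) (hn : 0 < n) (hpn : p ∣ n)
    (m : ℤ) (d : ℕ) (hd : d ∣ n) (hd' : d ∣ n / p) :
    (d : ℤ) * (1 - m ^ (n / d)) ≡ (d : ℤ) * (1 - m ^ (n / (p * d)))
      [ZMOD (p : ℤ) ^ (n.factorization p)] :=
  stmt_2_general p hp n hn hpn m d hd'
end

section
/- Let R be a commutative ring equipped with operations Ψⁿ : R → R for n ≥ 1 that are ring homomorphisms satisfying Ψ¹ = id and Ψᵐ ∘ Ψⁿ = Ψ^{mn}. Then for all sequences (a_n), (b_n) in R and every n ≥ 1: (∑_{i ∣ n} i·Ψ^{n/i}(a_i)) · (∑_{j ∣ n} j·Ψ^{n/j}(b_j)) = ∑_{d ∣ n} d·Ψ^{n/d}(c_d), where c_d := ∑_{i,j : lcm(i,j) = d} gcd(i,j)·Ψ^{d/i}(a_i)·Ψ^{d/j}(b_j). -/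
/-!
Expanding the left side gives one term `i j Ψ^{n/i}(a_i) Ψ^{n/j}(b_j)` for each pair `(i, j)` of
divisors of `n`. On the right this pair occurs exactly once, inside the summand `d = lcm(i, j)`,
where `Ψ^{n/d} ∘ Ψ^{d/i} = Ψ^{n/i}` and `d · gcd(i, j) = i j` turn it into the same term.
-/

open Finset

theorem Nat.sum_divisors_sum_filter_lcm_eq {M : Type*} [AddCommMonoid M] (n : ℕ)
    (f : ℕ × ℕ → M) :
    ∑ d ∈ n.divisors, ∑ q ∈ (n.divisors ×ˢ n.divisors).filter (fun q => q.1.lcm q.2 = d), f q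
      = ∑ q ∈ n.divisors ×ˢ n.divisors, f q := by
  refine sum_fiberwise_of_maps_to (fun q hq => ?_) f
  simp only [mem_product, Nat.mem_divisors] at hq ⊢
  exact ⟨Nat.lcm_dvd hq.1.1 hq.2.1, hq.1.2⟩

theorem Nat.filter_lcm_divisors_product_eq_of_dvd {d n : ℕ} (hdn : d ∣ n) (hn : n ≠ 0) :
    (d.divisors ×ˢ d.divisors).filter (fun q => q.1.lcm q.2 = d)
      = (n.divisors ×ˢ n.divisors).filter (fun q => q.1.lcm q.2 = d) := by
  have hd : d ≠ 0 := ne_zero_of_dvd_ne_zero hn hdn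
  ext ⟨i, j⟩
  simp only [mem_filter, mem_product, Nat.mem_divisors]
  constructor
  · rintro ⟨⟨⟨hid, -⟩, hjd, -⟩, hl⟩
    exact ⟨⟨⟨hid.trans hdn, hn⟩, hjd.trans hdn, hn⟩, hl⟩
  · rintro ⟨-, hl⟩
    exact ⟨⟨⟨hl ▸ Nat.dvd_lcm_left i j, hd⟩, hl ▸ Nat.dvd_lcm_right i j, hd⟩, hl⟩

section AdamsOperations

variable {R : Type*} [CommRing R] {Ψ : ℕ → R →+* R}

theorem apply_div_apply_div_of_dvd
    (hΨ : ∀ m n : ℕ, 1 ≤ m → 1 ≤ n → (Ψ m).comp (Ψ n) = Ψ (m * n))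
    {i d n : ℕ} (hid : i ∣ d) (hdn : d ∣ n) (hn : n ≠ 0) (x : R) :
    Ψ (n / d) (Ψ (d / i) x) = Ψ (n / i) x := by
  have hd : d ≠ 0 := ne_zero_of_dvd_ne_zero hn hdn
  have hi : i ≠ 0 := ne_zero_of_dvd_ne_zero hd hid
  have hnd : 1 ≤ n / d := Nat.one_le_iff_ne_zero.2 ((Nat.div_ne_zero_iff_of_dvd hdn).2 ⟨hn, hd⟩)
  have hdi : 1 ≤ d / i := Nat.one_le_iff_ne_zero.2 ((Nat.div_ne_zero_iff_of_dvd hid).2 ⟨hd, hi⟩)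
  rw [← RingHom.comp_apply, hΨ _ _ hnd hdi, Nat.div_mul_div hdn hid]

theorem natCast_mul_apply_sum_filter_lcm_eq
    (hΨ : ∀ m n : ℕ, 1 ≤ m → 1 ≤ n → (Ψ m).comp (Ψ n) = Ψ (m * n))
    (a b : ℕ → R) {d n : ℕ} (hdn : d ∣ n) (hn : n ≠ 0) :
    (d : R) * Ψ (n / d)
        (∑ q ∈ (d.divisors ×ˢ d.divisors).filter (fun q => q.1.lcm q.2 = d),
          (q.1.gcd q.2 : R) * (Ψ (d / q.1) (a q.1) * Ψ (d / q.2) (b q.2)))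
      = ∑ q ∈ (n.divisors ×ˢ n.divisors).filter (fun q => q.1.lcm q.2 = d),
          ((q.1 : R) * Ψ (n / q.1) (a q.1)) * ((q.2 : R) * Ψ (n / q.2) (b q.2)) := by
  rw [Nat.filter_lcm_divisors_product_eq_of_dvd hdn hn, map_sum, mul_sum]
  refine sum_congr rfl fun ⟨i, j⟩ hq => ?_
  have hl : i.lcm j = d := (mem_filter.1 hq).2
  have hid : i ∣ d := hl ▸ Nat.dvd_lcm_left i j
  have hjd : j ∣ d := hl ▸ Nat.dvd_lcm_right i j
  have hgcd_lcm : (i.gcd j : R) * d = i * j := by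
    rw [← hl, ← Nat.cast_mul, ← Nat.cast_mul, Nat.gcd_mul_lcm]
  rw [map_mul, map_mul, map_natCast, apply_div_apply_div_of_dvd hΨ hid hdn hn,
    apply_div_apply_div_of_dvd hΨ hjd hdn hn]
  linear_combination (Ψ (n / i) (a i) * Ψ (n / j) (b j)) * hgcd_lcm

end AdamsOperations

theorem stmt_11_general (R : Type*) [CommRing R] (Ψ : ℕ → R →+* R)
    (hΨ : ∀ m n : ℕ, 1 ≤ m → 1 ≤ n → (Ψ m).comp (Ψ n) = Ψ (m * n))
    (a b : ℕ → R) (n : ℕ) :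
    (∑ i ∈ n.divisors, (i : R) * Ψ (n / i) (a i)) *
        (∑ j ∈ n.divisors, (j : R) * Ψ (n / j) (b j))
      = ∑ d ∈ n.divisors, (d : R) * Ψ (n / d)
          (∑ q ∈ (d.divisors ×ˢ d.divisors).filter (fun q => Nat.lcm q.1 q.2 = d),
            (Nat.gcd q.1 q.2 : R) * (Ψ (d / q.1) (a q.1) * Ψ (d / q.2) (b q.2))) := by
  rw [sum_congr rfl fun d hd => natCast_mul_apply_sum_filter_lcm_eq hΨ a b
      (Nat.dvd_of_mem_divisors hd) (Nat.mem_divisors.1 hd).2,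
    Nat.sum_divisors_sum_filter_lcm_eq, sum_mul_sum, sum_product]

theorem stmt_11 (R : Type*) [CommRing R] (Ψ : ℕ → R →+* R)
    (hΨ1 : Ψ 1 = RingHom.id R)
    (hΨ : ∀ m n : ℕ, 1 ≤ m → 1 ≤ n → (Ψ m).comp (Ψ n) = Ψ (m * n))
    (a b : ℕ → R) (n : ℕ) (hn : 1 ≤ n) :
    (∑ i ∈ n.divisors, (i : R) * Ψ (n / i) (a i)) *
        (∑ j ∈ n.divisors, (j : R) * Ψ (n / j) (b j))
      = ∑ d ∈ n.divisors, (d : R) * Ψ (n / d)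
          (∑ q ∈ (d.divisors ×ˢ d.divisors).filter (fun q => Nat.lcm q.1 q.2 = d),
            (Nat.gcd q.1 q.2 : R) * (Ψ (d / q.1) (a q.1) * Ψ (d / q.2) (b q.2))) :=
  stmt_11_general R Ψ hΨ a b n
end

section
/- Let m ≠ 1 be an integer and define E_n ∈ ℚ (n ≥ 1) by the recursion ∑_{d ∣ n} d·(1 − m^(n/d))·E_d^(n/d) = 1 for all n ≥ 1 (note the powers E_d^(n/d)). Then (1 − m)^n · E_n ∈ ℤ for every n ≥ 1. -/
/-!
Put `F d = (1 - m)^d E d`. The recursion says exactly that the logarithmic derivatives, for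
`θ = X d/dX`, of `∏_{d ≤ n} (1 - F d X^d)` and `(1 - (1 - m) X) ∏_{d ≤ n} (1 - m F d X^d)` agree up
to degree `n`, so the two products agree up to degree `n`. Comparing `X^n`-coefficients gives
`(1 - m) F n` as the difference of the `X^n`-coefficients of the same products over `d < n`. By
induction these have integer coefficients, and they are congruent modulo `1 - m` because
`m ≡ 1`; hence `F n ∈ ℤ`.
-/

open PowerSeries Finset

namespace DeformedWitt

section CommRing

variable {R : Type*} [CommRing R]

variable (R) in
/-- The Euler operator `θ = X d/dX`. -/
noncomputable def theta : Derivation R R⟦X⟧ R⟦X⟧ := (X : R⟦X⟧) • d⁄dX R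

lemma coeff_theta (f : R⟦X⟧) (n : ℕ) : coeff n (theta R f) = n * coeff n f := by
  rcases n with _ | n
  · simp [theta]
  · simp [theta, coeff_succ_X_mul, coeff_derivative, mul_comm]

lemma Derivation.map_prod_of_eq_mul {A ι : Type*} [CommRing A] [Algebra R A]
    (D : Derivation R A A) (s : Finset ι) (f ℓ : ι → A) (h : ∀ i ∈ s, D (f i) = ℓ i * f i) :
    D (∏ i ∈ s, f i) = (∑ i ∈ s, ℓ i) * ∏ i ∈ s, f i := by
  induction s using Finset.cons_induction with
  | empty => simp
  | cons a s _ ih =>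
    rw [prod_cons, sum_cons, D.leibniz, smul_eq_mul, smul_eq_mul, h a (mem_cons_self a s),
      ih fun i hi => h i (mem_cons_of_mem hi)]
    ring

lemma coeff_mul_one_sub_C_mul_X_pow (f : R⟦X⟧) (c : R) (n : ℕ) :
    coeff n (f * (1 - C c * X ^ n)) = coeff n f - c * constantCoeff f := by
  rw [mul_sub, mul_one, mul_left_comm, map_sub, coeff_C_mul, coeff_mul_X_pow', if_pos le_rfl,
    Nat.sub_self, coeff_zero_eq_constantCoeff_apply]

/-- `-θ log (1 - c X^d) = ∑_{k ≥ 1} d c^k X^{dk}`. -/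
noncomputable def thetaLog (c : R) (d : ℕ) : R⟦X⟧ :=
  mk fun n => if d ∣ n ∧ n ≠ 0 then d * c ^ (n / d) else 0

lemma thetaLog_mul_one_sub (c : R) (d : ℕ) :
    thetaLog c d * (1 - C c * X ^ d) = C (d * c) * X ^ d := by
  ext n
  rw [mul_sub, mul_one, mul_left_comm, map_sub, coeff_C_mul, coeff_mul_X_pow', coeff_C_mul_X_pow]
  simp only [thetaLog, coeff_mk]
  rcases lt_or_ge n d with hnd | hdn
  · have : ¬ (d ∣ n ∧ n ≠ 0) := fun h => hnd.not_ge (Nat.le_of_dvd (Nat.pos_of_ne_zero h.2) h.1)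
    simp [this, hnd.not_ge, hnd.ne]
  obtain ⟨k, rfl⟩ := Nat.exists_eq_add_of_le' hdn
  rcases Nat.eq_zero_or_pos d with rfl | hd
  · simp
  have hkd : k + d ≠ 0 := by omega
  simp only [if_pos (Nat.le_add_left d k), Nat.add_sub_cancel, Nat.add_div_right k hd,
    Nat.dvd_add_self_right, hkd, ne_eq, not_false_eq_true, and_true, add_eq_right]
  by_cases hdk : d ∣ k
  · rcases eq_or_ne k 0 with rfl | hk
    · simp
    · simp [hdk, hk, pow_succ]; ring
  · simp [hdk, show k ≠ 0 by rintro rfl; exact hdk (dvd_zero d)]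

lemma theta_one_sub (c : R) (d : ℕ) :
    theta R (1 - C c * X ^ d) = -thetaLog c d * (1 - C c * X ^ d) := by
  rw [neg_mul, thetaLog_mul_one_sub]
  ext n
  rw [coeff_theta, map_sub, coeff_one, coeff_C_mul_X_pow, map_neg, coeff_C_mul_X_pow]
  split_ifs <;> simp_all

lemma coeff_sum_thetaLog (c : ℕ → R) {n N : ℕ} (hn : n ≤ N) :
    coeff n (∑ d ∈ Ico 1 (N + 1), thetaLog (c d) d) = ∑ d ∈ n.divisors, d * c d ^ (n / d) := by
  simp only [map_sum, thetaLog, coeff_mk]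
  rw [← sum_filter]
  congr 1
  ext d
  simp only [mem_filter, mem_Ico, Nat.mem_divisors]
  constructor
  · exact fun h => h.2
  · rintro ⟨hdn, hn0⟩
    exact ⟨⟨Nat.pos_of_dvd_of_pos hdn (Nat.pos_of_ne_zero hn0),
      by have := Nat.le_of_dvd (Nat.pos_of_ne_zero hn0) hdn; omega⟩, hdn, hn0⟩

lemma coeff_thetaLog_one (c : R) (n : ℕ) : coeff n (thetaLog c 1) = if n = 0 then 0 else c ^ n := by
  simp [thetaLog, ite_not]

noncomputable def prodOneSub (c : ℕ → R) (s : Finset ℕ) : R⟦X⟧ :=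
  ∏ d ∈ s, (1 - C (c d) * X ^ d)

lemma theta_prodOneSub (c : ℕ → R) (s : Finset ℕ) :
    theta R (prodOneSub c s) = -(∑ d ∈ s, thetaLog (c d) d) * prodOneSub c s := by
  rw [prodOneSub, Derivation.map_prod_of_eq_mul _ _ _ (fun d => -thetaLog (c d) d)
    fun d _ => theta_one_sub (c d) d, sum_neg_distrib]

lemma constantCoeff_prodOneSub (c : ℕ → R) {s : Finset ℕ} (hs : 0 ∉ s) :
    constantCoeff (prodOneSub c s) = 1 := by
  rw [prodOneSub, map_prod]
  refine prod_eq_one fun d hd => ?_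
  simp [show d ≠ 0 by rintro rfl; exact hs hd]

lemma map_prodOneSub {S : Type*} [CommRing S] (φ : R →+* S) (c : ℕ → R) (s : Finset ℕ) :
    map φ (prodOneSub c s) = prodOneSub (fun d => φ (c d)) s := by
  simp [prodOneSub, map_prod]

lemma sub_dvd_coeff_sub (m : R) (G : ℕ → R) (s : Finset ℕ) (n : ℕ) :
    1 - m ∣ coeff n (prodOneSub G s)
      - coeff n ((1 - C (1 - m) * X) * prodOneSub (fun d => m * G d) s) := by
  have hm : Ideal.Quotient.mk (Ideal.span {1 - m}) m = 1 := by
    rw [← map_one (Ideal.Quotient.mk _), Ideal.Quotient.eq, Ideal.mem_span_singleton]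
    exact ⟨-1, by ring⟩
  rw [← Ideal.Quotient.eq_zero_iff_dvd, map_sub, sub_eq_zero, ← coeff_map, ← coeff_map, map_mul,
    map_prodOneSub, map_prodOneSub]
  simp [hm]

end CommRing

section Field

variable {K : Type*} [Field K] [CharZero K]

lemma coeff_eq_of_theta_eq_mul {f g a b : K⟦X⟧} {N : ℕ} (hf : theta K f = a * f)
    (hg : theta K g = b * g) (hfg : constantCoeff f = constantCoeff g) (ha : constantCoeff a = 0)
    (hab : ∀ k ≤ N, coeff k a = coeff k b) : ∀ k ≤ N, coeff k f = coeff k g := by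
  intro k
  induction k using Nat.strong_induction_on with
  | _ k ih =>
  intro hk
  rcases Nat.eq_zero_or_pos k with rfl | hk0
  · simpa using hfg
  rw [← coeff_zero_eq_constantCoeff_apply] at ha
  have hb : coeff 0 b = 0 := hab 0 (Nat.zero_le N) ▸ ha
  have key : (k : K) * coeff k f = k * coeff k g := by
    rw [← coeff_theta, ← coeff_theta, hf, hg, coeff_mul, coeff_mul]
    refine sum_congr rfl fun ⟨i, j⟩ hij => ?_
    rw [HasAntidiagonal.mem_antidiagonal] at hij
    rcases Nat.eq_zero_or_pos i with rfl | hi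
    · rw [ha, hb, zero_mul, zero_mul]
    · rw [hab i (by omega), ih j (by omega) (by omega)]
  exact mul_left_cancel₀ (Nat.cast_ne_zero.2 hk0.ne') key

lemma one_sub_mul_eq_coeff_sub (q : K) (F : ℕ → K) {N : ℕ} (hN : 1 ≤ N)
    (hF : ∀ n, 1 ≤ n → n ≤ N →
      ∑ d ∈ n.divisors, d * (F d ^ (n / d) - (q * F d) ^ (n / d)) = (1 - q) ^ n) :
    (1 - q) * F N = coeff N (prodOneSub F (Ico 1 N))
      - coeff N ((1 - C (1 - q) * X) * prodOneSub (fun d => q * F d) (Ico 1 N)) := by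
  set R : K⟦X⟧ := 1 - C (1 - q) * X
  have hR : theta K R = -thetaLog (1 - q) 1 * R := by
    simpa only [pow_one] using theta_one_sub (1 - q) 1
  have hRV : theta K (R * prodOneSub (fun d => q * F d) (Ico 1 (N + 1))) =
      -(thetaLog (1 - q) 1 + ∑ d ∈ Ico 1 (N + 1), thetaLog (q * F d) d) *
        (R * prodOneSub (fun d => q * F d) (Ico 1 (N + 1))) := by
    rw [Derivation.leibniz, theta_prodOneSub, hR, smul_eq_mul, smul_eq_mul]
    ring
  have hR0 : constantCoeff R = 1 := by simp [R]
  have h0 {c : ℕ → K} {M : ℕ} : constantCoeff (prodOneSub c (Ico 1 M)) = 1 :=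
    constantCoeff_prodOneSub _ (by simp)
  have hU : coeff N (prodOneSub F (Ico 1 (N + 1))) =
      coeff N (R * prodOneSub (fun d => q * F d) (Ico 1 (N + 1))) := by
    refine coeff_eq_of_theta_eq_mul (theta_prodOneSub _ _) hRV ?_ ?_ ?_ N le_rfl
    · rw [h0, map_mul, hR0, h0, one_mul]
    · rw [map_neg, ← coeff_zero_eq_constantCoeff_apply, coeff_sum_thetaLog F (Nat.zero_le N),
        Nat.divisors_zero, sum_empty, neg_zero]
    · intro k hk
      rw [map_neg, map_neg, map_add, coeff_sum_thetaLog _ hk, coeff_sum_thetaLog _ hk,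
        coeff_thetaLog_one, neg_inj]
      rcases Nat.eq_zero_or_pos k with rfl | hk0
      · simp
      rw [if_neg hk0.ne', ← hF k hk0 hk, ← sum_add_distrib]
      exact sum_congr rfl fun d _ => by ring
  have hsplit (c : ℕ → K) :
      prodOneSub c (Ico 1 (N + 1)) = prodOneSub c (Ico 1 N) * (1 - C (c N) * X ^ N) :=
    prod_Ico_succ_top hN _
  rw [hsplit, hsplit, ← mul_assoc, coeff_mul_one_sub_C_mul_X_pow, coeff_mul_one_sub_C_mul_X_pow,
    h0, map_mul constantCoeff, hR0, h0] at hU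
  linear_combination -hU

end Field

theorem exists_int_eq_of_sum_divisors (m : ℤ) (hm : m ≠ 1) (F : ℕ → ℚ)
    (hF : ∀ n, 1 ≤ n →
      ∑ d ∈ n.divisors, d * (F d ^ (n / d) - (m * F d) ^ (n / d)) = (1 - m) ^ n) :
    ∀ n, 1 ≤ n → ∃ z : ℤ, F n = z := by
  intro N
  induction N using Nat.strong_induction_on with
  | _ N ih =>
  intro hN
  choose! G hG using fun d (hd : d ∈ Ico 1 N) => ih d (mem_Ico.1 hd).2 (mem_Ico.1 hd).1
  have hU : prodOneSub F (Ico 1 N) = map (Int.castRingHom ℚ) (prodOneSub G (Ico 1 N)) := by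
    rw [map_prodOneSub]
    exact prod_congr rfl fun d hd => by simp [hG d hd]
  have hW : (1 - C (1 - (m : ℚ)) * X) * prodOneSub (fun d => m * F d) (Ico 1 N) =
      map (Int.castRingHom ℚ) ((1 - C (1 - m) * X) * prodOneSub (fun d => m * G d) (Ico 1 N)) := by
    rw [map_mul, map_prodOneSub]
    congr 1
    · simp
    · exact prod_congr rfl fun d hd => by simp [hG d hd]
  obtain ⟨w, hw⟩ := sub_dvd_coeff_sub m G (Ico 1 N) N
  refine ⟨w, mul_left_cancel₀ (sub_ne_zero.2 (Int.cast_ne_one.2 hm).symm) ?_⟩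
  rw [one_sub_mul_eq_coeff_sub (m : ℚ) F hN fun n hn _ => hF n hn, hU, hW, coeff_map, coeff_map,
    ← map_sub, hw, eq_intCast, Int.cast_mul, Int.cast_sub, Int.cast_one]

end DeformedWitt

open DeformedWitt in
theorem stmt_13 (m : ℤ) (hm : m ≠ 1) (E : ℕ → ℚ)
    (hE : ∀ n : ℕ, 1 ≤ n →
      ∑ d ∈ n.divisors, (d : ℚ) * (1 - (m : ℚ) ^ (n / d)) * E d ^ (n / d) = 1)
    (n : ℕ) (hn : 1 ≤ n) :
    ∃ z : ℤ, (1 - (m : ℚ)) ^ n * E n = (z : ℚ) := by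
  refine exists_int_eq_of_sum_divisors m hm (fun d => (1 - (m : ℚ)) ^ d * E d) (fun k hk => ?_) n hn
  calc ∑ d ∈ k.divisors,
        (d : ℚ) * (((1 - m) ^ d * E d) ^ (k / d) - (m * ((1 - m) ^ d * E d)) ^ (k / d))
      = (1 - m) ^ k * ∑ d ∈ k.divisors, (d : ℚ) * (1 - (m : ℚ) ^ (k / d)) * E d ^ (k / d) := by
        rw [mul_sum]
        refine sum_congr rfl fun d hd => ?_
        rw [mul_pow, mul_pow, mul_pow, ← pow_mul, Nat.mul_div_cancel' (Nat.dvd_of_mem_divisors hd)]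
        ring
    _ = (1 - m) ^ k := by rw [hE k hk, mul_one]
end

section
/- Fix an integer m and let μ_m : ℕ≥1 → ℤ be defined by μ_m(1) = 1 and ∑_{d ∣ n} [n/d]_m · μ_m(d) = 0 for n > 1, where [k]_m = ∑_{i=0}^{k−1} m^i. Then for every positive integer n, n divides (1 − m) · ∑_{e ∣ n} [n/e]_m² · μ_m(e). -/
/-!
Write `[k]` for `∑ i < k, m ^ i` and `μₘ` for the Dirichlet inverse of `k ↦ [k]`. Since
`(1 - m) [k]² = 2 [k] - [2k]`, the sum equals `2 [n = 1] - B(n)` with `B = [2 ·] * μₘ`, so it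
suffices that `p ^ v_p(n) ∣ B(n)` for every prime `p`. Arithmetic functions with
`p ^ v_p(n) ∣ f(n)` for all `n` are closed under Dirichlet convolution and under division by such
an `f` with `f(1)` prime to `p`.

If `p ∣ m - 1`, then `p ^ v_p(k) ∣ [k]`, so `[·]`, `[2 ·]`, hence `μₘ` and `B`, have the property.
Otherwise use `(m - 1) [k] = m ^ k - 1`: convolving `B` with `μ * (m ^ · - 1)` gives
`μ * (m ^ (2 ·) - 1)`, and `μ * (x ^ · - 1)` has the property for every integer `x` by the Gauss
congruence `p ^ (j + 1) ∣ x ^ (p ^ (j + 1) t) - x ^ (p ^ j t)`, while its value at `1` is `m - 1`.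
-/

open Finset ArithmeticFunction

lemma Nat.Coprime.sum_divisors_mul_eq {M : Type*} [AddCommMonoid M] {a b : ℕ}
    (hab : a.Coprime b) (F : ℕ → M) :
    ∑ d ∈ (a * b).divisors, F d = ∑ d₁ ∈ a.divisors, ∑ d₂ ∈ b.divisors, F (d₁ * d₂) := by
  rw [hab.divisors_mul, sum_map]
  exact (sum_attach _ fun x => F (x.1 * x.2)).trans (sum_product _ _ _)

namespace ArithmeticFunction

variable {R : Type*} [CommRing R]

def OrdProjDvd (p : ℕ) (f : ArithmeticFunction R) : Prop :=
  ∀ n, (p : R) ^ n.factorization p ∣ f n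

lemma pow_factorization_dvd_mul_of_mem_divisorsAntidiagonal {p n : ℕ} {x : ℕ × ℕ}
    (hx : x ∈ n.divisorsAntidiagonal) {a b : R} (ha : (p : R) ^ x.1.factorization p ∣ a)
    (hb : (p : R) ^ x.2.factorization p ∣ b) : (p : R) ^ n.factorization p ∣ a * b := by
  obtain ⟨rfl, hn⟩ := Nat.mem_divisorsAntidiagonal.mp hx
  rw [Nat.factorization_mul (left_ne_zero_of_mul hn) (right_ne_zero_of_mul hn),
    Finsupp.add_apply, pow_add]
  exact mul_dvd_mul ha hb

namespace OrdProjDvd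

variable {p : ℕ} {f g : ArithmeticFunction R}

lemma one : OrdProjDvd p (1 : ArithmeticFunction R) := by
  intro n
  rcases eq_or_ne n 1 with rfl | hn
  · simp
  · simp [one_apply_ne hn]

lemma mul (hf : OrdProjDvd p f) (hg : OrdProjDvd p g) : OrdProjDvd p (f * g) := fun _ =>
  dvd_sum fun _ hx => pow_factorization_dvd_mul_of_mem_divisorsAntidiagonal hx (hf _) (hg _)

lemma of_mul (hf : OrdProjDvd p f) (hfg : OrdProjDvd p (f * g)) (hf₁ : IsCoprime (f 1) (p : R)) :
    OrdProjDvd p g := by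
  intro n
  induction n using Nat.strong_induction_on with
  | h n ih =>
  rcases eq_or_ne n 0 with rfl | hn
  · simp
  have hmem : (1, n) ∈ n.divisorsAntidiagonal := by simp [hn]
  have hsplit : (f * g) n =
      f 1 * g n + ∑ x ∈ n.divisorsAntidiagonal.erase (1, n), f x.1 * g x.2 := by
    rw [mul_apply, add_sum_erase _ (fun x => f x.1 * g x.2) hmem]
  have hrest : (p : R) ^ n.factorization p ∣
      ∑ x ∈ n.divisorsAntidiagonal.erase (1, n), f x.1 * g x.2 := by
    refine dvd_sum fun x hx => ?_
    obtain ⟨hne, hx⟩ := mem_erase.mp hx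
    refine pow_factorization_dvd_mul_of_mem_divisorsAntidiagonal hx (hf _) (ih _ ?_)
    obtain ⟨hprod, -⟩ := Nat.mem_divisorsAntidiagonal.mp hx
    have h₁ : x.1 ≠ 1 := fun h => hne (Prod.ext h (by simpa [h] using hprod))
    have h₀ : x.1 ≠ 0 := left_ne_zero_of_mul (hprod ▸ hn)
    rw [← hprod]
    exact lt_mul_left (Nat.pos_of_ne_zero (right_ne_zero_of_mul (hprod ▸ hn))) (by omega)
  have hmain : (p : R) ^ n.factorization p ∣ f 1 * g n := by
    simpa [hsplit] using dvd_sub (hfg n) hrest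
  exact (hf₁.symm.pow_left).dvd_of_dvd_mul_left hmain

end OrdProjDvd

lemma natCast_dvd_of_forall_ordProjDvd {f : ArithmeticFunction ℤ}
    (hf : ∀ p, p.Prime → OrdProjDvd p f) (n : ℕ) : (n : ℤ) ∣ f n := by
  rcases eq_or_ne n 0 with rfl | hn
  · simp
  rw [Int.natCast_dvd, Nat.dvd_iff_prime_pow_dvd_dvd]
  intro p k hp hk
  rw [← Int.natCast_dvd, Nat.cast_pow]
  exact (pow_dvd_pow _ ((hp.pow_dvd_iff_le_factorization hn).mp hk)).trans (hf p hp n)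

lemma moebius_mul_apply_prime_pow_succ_mul (g : ArithmeticFunction R) {p s : ℕ} (hp : p.Prime)
    (hs : ¬p ∣ s) (k : ℕ) :
    ((moebius : ArithmeticFunction R) * g) (p ^ (k + 1) * s) =
      ∑ d ∈ s.divisors, (moebius d : R) * (g (p ^ (k + 1) * (s / d)) - g (p ^ k * (s / d))) := by
  rw [mul_apply,
    Nat.sum_divisorsAntidiagonal fun a b => (moebius : ArithmeticFunction R) a * g b,
    (((hp.coprime_iff_not_dvd).mpr hs).pow_left (k + 1)).sum_divisors_mul_eq, sum_comm]
  refine sum_congr rfl fun d hd => ?_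
  have hds : d ∣ s := Nat.dvd_of_mem_divisors hd
  have hμ (j : ℕ) :
      (moebius : ArithmeticFunction R) (p ^ j * d) = moebius (p ^ j) * moebius d := by
    rw [intCoe_apply, isMultiplicative_moebius.map_mul_of_coprime
      (((hp.coprime_iff_not_dvd).mpr fun h => hs (h.trans hds)).pow_left j), Int.cast_mul]
  have hdiv (i j : ℕ) (hij : i + j = k + 1) : p ^ (k + 1) * s / (p ^ i * d) = p ^ j * (s / d) := by
    rw [← Nat.div_mul_div_comm (pow_dvd_pow p (by omega)) hds, ← hij, pow_add,
      Nat.mul_div_cancel_left _ (pow_pos hp.pos i)]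
  have hsq (j : ℕ) : (moebius (p ^ (j + 1 + 1)) : R) = 0 := by
    simp [moebius_apply_prime_pow hp]
  simp only [Nat.sum_divisors_prime_pow hp, hμ]
  rw [sum_range_succ', sum_range_succ', hdiv (0 + 1) k (by omega), hdiv 0 (k + 1) (by omega)]
  simp only [hsq, zero_mul, sum_const_zero, zero_add, pow_one, pow_zero, moebius_apply_prime hp,
    moebius_apply_one]
  push_cast
  ring

def powSubOne (x : R) : ArithmeticFunction R := ⟨fun n => x ^ n - 1, by simp⟩

@[simp]
lemma powSubOne_apply (x : R) (n : ℕ) : powSubOne x n = x ^ n - 1 := rfl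

lemma pow_succ_dvd_moebius_mul_powSubOne_apply (x : ℤ) {p s : ℕ} (hp : p.Prime) (hs : ¬p ∣ s)
    (k : ℕ) :
    (p : ℤ) ^ (k + 1) ∣ ((moebius : ArithmeticFunction ℤ) * powSubOne x) (p ^ (k + 1) * s) := by
  rw [← intCoe_int moebius, moebius_mul_apply_prime_pow_succ_mul _ hp hs]
  refine dvd_sum fun d _ => dvd_mul_of_dvd_right ?_ _
  rw [powSubOne_apply, powSubOne_apply, sub_sub_sub_cancel_right]
  convert dvd_sub_pow_of_dvd_sub (Int.prime_dvd_pow_self_sub hp (x ^ (s / d))) k using 2 <;> ring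

lemma ordProjDvd_moebius_mul_powSubOne (x : ℤ) {p : ℕ} (hp : p.Prime) :
    OrdProjDvd p ((moebius : ArithmeticFunction ℤ) * powSubOne x) := by
  intro n
  rcases eq_or_ne n 0 with rfl | hn
  · simp
  have hs := Nat.not_dvd_ordCompl hp hn
  conv_rhs => rw [← Nat.ordProj_mul_ordCompl_eq_self n p]
  generalize n.factorization p = e at hs ⊢
  rcases e with _ | k
  · simp
  · exact pow_succ_dvd_moebius_mul_powSubOne_apply x hp hs k

def qInt (m : R) : ArithmeticFunction R := ⟨fun k => ∑ i ∈ range k, m ^ i, by simp⟩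

def qIntTwoMul (m : R) : ArithmeticFunction R := ⟨fun k => qInt m (2 * k), by simp⟩

@[simp]
lemma qInt_apply (m : R) (k : ℕ) : qInt m k = ∑ i ∈ range k, m ^ i := rfl

@[simp]
lemma qIntTwoMul_apply (m : R) (k : ℕ) : qIntTwoMul m k = qInt m (2 * k) := rfl

lemma qInt_apply_mul (m : R) (a b : ℕ) : qInt m (a * b) = qInt (m ^ b) a * qInt m b := by
  induction a with
  | zero => simp
  | succ a ih =>
    rw [add_one_mul, qInt_apply, sum_range_add, ← qInt_apply, ih]
    simp only [qInt_apply, sum_range_succ, pow_add, ← mul_sum, ← pow_mul, mul_comm b a]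
    ring

lemma one_sub_mul_qInt_sq (m : R) (k : ℕ) :
    (1 - m) * qInt m k ^ 2 = 2 * qInt m k - qIntTwoMul m k := by
  rw [qIntTwoMul_apply, qInt_apply_mul, qInt_apply (m ^ k), geom_sum_two]
  have h := mul_neg_geom_sum m k
  rw [← qInt_apply] at h
  linear_combination qInt m k * h

lemma sub_one_smul_qInt (m : R) : (m - 1) • qInt m = powSubOne m := by
  ext k
  simp [mul_geom_sum]

lemma sub_one_smul_qIntTwoMul (m : R) : (m - 1) • qIntTwoMul m = powSubOne (m ^ 2) := by
  ext k
  simp [mul_geom_sum, pow_mul]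

lemma dvd_qInt_apply_self {p : ℕ} {m : R} (hpm : (p : R) ∣ m - 1) : (p : R) ∣ qInt m p := by
  have hsplit : qInt m p = ∑ i ∈ range p, (m ^ i - 1) + p := by simp
  rw [hsplit]
  exact dvd_add (dvd_sum fun i _ => hpm.trans (sub_one_dvd_pow_sub_one m i)) dvd_rfl

lemma pow_dvd_qInt_apply {p : ℕ} {m : R} (hpm : (p : R) ∣ m - 1) {j t : ℕ} (h : p ^ j ∣ t) :
    (p : R) ^ j ∣ qInt m t := by
  induction j generalizing t with
  | zero => simp
  | succ j ih =>
    obtain ⟨c, rfl⟩ := h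
    rw [pow_succ' p j, mul_assoc, qInt_apply_mul, pow_succ' (p : R)]
    exact mul_dvd_mul (dvd_qInt_apply_self (hpm.trans (sub_one_dvd_pow_sub_one m _)))
      (ih (dvd_mul_right _ _))

def ofFun (f : ℕ → R) : ArithmeticFunction R := ⟨fun n => if n = 0 then 0 else f n, if_pos rfl⟩

lemma mul_ofFun_apply (f : ArithmeticFunction R) (g : ℕ → R) (n : ℕ) :
    (f * ofFun g) n = ∑ e ∈ n.divisors, f (n / e) * g e := by
  rw [mul_apply, Nat.sum_divisorsAntidiagonal' fun a b => f a * ofFun g b]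
  refine sum_congr rfl fun e he => ?_
  simp [ofFun, (Nat.pos_of_mem_divisors he).ne']

lemma qInt_mul_ofFun_eq_one {m : R} {μ : ℕ → R} (h1 : μ 1 = 1)
    (hrec : ∀ n : ℕ, 1 < n → ∑ d ∈ n.divisors, (∑ i ∈ range (n / d), m ^ i) * μ d = 0) :
    qInt m * ofFun μ = 1 := by
  ext n
  rw [mul_ofFun_apply]
  rcases n with _ | _ | n
  · simp
  · simp [h1]
  · rw [one_apply_ne (by omega)]
    exact hrec (n + 2) (by omega)

lemma one_sub_mul_sum_qInt_sq (m : R) (g : ℕ → R) (n : ℕ) :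
    (1 - m) * ∑ e ∈ n.divisors, qInt m (n / e) ^ 2 * g e =
      2 * (qInt m * ofFun g) n - (qIntTwoMul m * ofFun g) n := by
  rw [mul_ofFun_apply, mul_ofFun_apply, mul_sum, mul_sum, ← sum_sub_distrib]
  refine sum_congr rfl fun e _ => ?_
  linear_combination g e * one_sub_mul_qInt_sq m (n / e)

lemma powSubOne_mul_qIntTwoMul_mul {m : R} {g : ArithmeticFunction R} (hg : qInt m * g = 1) :
    powSubOne m * (qIntTwoMul m * g) = powSubOne (m ^ 2) := by
  rw [← sub_one_smul_qInt, ← sub_one_smul_qIntTwoMul, smul_mul_assoc, mul_left_comm, hg, mul_one]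

lemma natCast_dvd_qIntTwoMul_mul_apply {m : ℤ} {g : ArithmeticFunction ℤ} (hg : qInt m * g = 1)
    (n : ℕ) : (n : ℤ) ∣ (qIntTwoMul m * g) n := by
  refine natCast_dvd_of_forall_ordProjDvd (fun p hp => ?_) n
  by_cases hpm : (p : ℤ) ∣ m - 1
  · have hq : OrdProjDvd p (qInt m) := fun k => pow_dvd_qInt_apply hpm (Nat.ordProj_dvd k p)
    have hq₂ : OrdProjDvd p (qIntTwoMul m) := fun k =>
      pow_dvd_qInt_apply hpm ((Nat.ordProj_dvd k p).mul_left 2)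
    exact hq₂.mul (hq.of_mul (hg ▸ OrdProjDvd.one) (by simp [isCoprime_one_left]))
  · refine (ordProjDvd_moebius_mul_powSubOne m hp).of_mul ?_ ?_
    · rw [mul_assoc, powSubOne_mul_qIntTwoMul_mul hg]
      exact ordProjDvd_moebius_mul_powSubOne _ hp
    · simpa using ((Nat.prime_iff_prime_int.mp hp).coprime_iff_not_dvd.mpr hpm).symm

end ArithmeticFunction

theorem stmt_14_general (m : ℤ) (μ : ℕ → ℤ) (h1 : μ 1 = 1)
    (hrec : ∀ n : ℕ, 1 < n →
      ∑ d ∈ n.divisors, (∑ i ∈ Finset.range (n / d), m ^ i) * μ d = 0)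
    (n : ℕ) :
    (n : ℤ) ∣ (1 - m) * ∑ e ∈ n.divisors,
      (∑ i ∈ Finset.range (n / e), m ^ i) ^ 2 * μ e := by
  have hμ := qInt_mul_ofFun_eq_one h1 hrec
  have hδ : (n : ℤ) ∣ (1 : ArithmeticFunction ℤ) n := by
    rcases eq_or_ne n 1 with rfl | hn
    · simp
    · simp [one_apply_ne hn]
  simp only [← qInt_apply]
  rw [one_sub_mul_sum_qInt_sq, hμ]
  exact dvd_sub (dvd_mul_of_dvd_right hδ 2) (natCast_dvd_qIntTwoMul_mul_apply hμ n)

theorem stmt_14 (m : ℤ) (μ : ℕ → ℤ) (h1 : μ 1 = 1)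
    (hrec : ∀ n : ℕ, 1 < n →
      ∑ d ∈ n.divisors, (∑ i ∈ Finset.range (n / d), m ^ i) * μ d = 0)
    (n : ℕ) (hn : 0 < n) :
    (n : ℤ) ∣ (1 - m) * ∑ e ∈ n.divisors,
      (∑ i ∈ Finset.range (n / e), m ^ i) ^ 2 * μ e :=
  stmt_14_general m μ h1 hrec n
end

section
/- Let m be an integer. If i, j divide n, then ∑_{e ∣ n/lcm(i,j)} [n/(e·i)]_{−1} · [n/(e·j)]_{−1} · μ_{−1}(e) equals 1 if both n/i and n/j are odd and lcm(i,j) = n, and equals 0 otherwise. Here [k]_{−1} = 1 if k is odd and 0 if k is even, and μ_{−1} is defined by μ_{−1}(1) = 1 and ∑_{d ∣ n} [n/d]_{−1}·μ_{−1}(d) = 0 for n > 1. -/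
/-!
Write `n = M * L` with `L = lcm i j`. For `e ∣ M` the quotient `n / (e * i)` is `(M / e) * (L / i)`,
and a product is odd iff both factors are, so every summand is `[L/i] [L/j] [M/e] μ(e)`. Pulling out
the constant factor leaves `∑_{e ∣ M} [M/e] μ(e)`, which by the defining relation of `μ` is `1` for
`M = 1` and `0` otherwise.
-/

open Finset

theorem geom_sum_neg_one_eq_ite {R : Type*} [Ring R] (k : ℕ) :
    ∑ r ∈ range k, (-1 : R) ^ r = if Odd k then 1 else 0 := by
  rw [neg_one_geom_sum]
  by_cases h : Even k <;> simp [h, ← Nat.not_even_iff_odd]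

theorem geom_sum_neg_one_mul_mul {R : Type*} [Ring R] (a b c : ℕ) :
    (∑ r ∈ range (a * b), (-1 : R) ^ r) * ∑ r ∈ range (a * c), (-1 : R) ^ r
      = (if Odd b ∧ Odd c then 1 else 0) * ∑ r ∈ range a, (-1 : R) ^ r := by
  simp only [geom_sum_neg_one_eq_ite, Nat.odd_mul]
  split_ifs <;> simp_all

theorem sum_divisors_neg_one_geom_sum_mul_eq_ite (μ : ℕ → ℤ) (h1 : μ 1 = 1)
    (hrec : ∀ n : ℕ, 1 < n →
      ∑ d ∈ n.divisors, (∑ i ∈ range (n / d), (-1 : ℤ) ^ i) * μ d = 0) (m : ℕ) :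
    ∑ d ∈ m.divisors, (∑ i ∈ range (m / d), (-1 : ℤ) ^ i) * μ d = if m = 1 then 1 else 0 := by
  rcases Nat.lt_trichotomy m 1 with hm | rfl | hm
  · obtain rfl : m = 0 := Nat.lt_one_iff.mp hm
    simp
  · simp [h1]
  · rw [hrec m hm, if_neg hm.ne']

theorem div_mul_eq_div_div_mul_div {n L e d : ℕ} (hL : L ∣ n) (he : e ∣ n / L) (hd : d ∣ L) :
    n / (e * d) = n / L / e * (L / d) := by
  rw [Nat.div_mul_div_comm he hd, Nat.div_mul_cancel hL]

theorem odd_div_and_div_eq_one_iff {n L a b : ℕ} (hL : L ∣ n) :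
    (Odd (L / a) ∧ Odd (L / b)) ∧ n / L = 1 ↔ Odd (n / a) ∧ Odd (n / b) ∧ L = n := by
  constructor
  · rintro ⟨hodd, hM⟩
    obtain rfl : L = n := by simpa [hM] using Nat.div_mul_cancel hL
    exact ⟨hodd.1, hodd.2, rfl⟩
  · rintro ⟨hodd_a, hodd_b, rfl⟩
    have hL0 : 0 < L := Nat.pos_of_ne_zero fun h => by simp [h] at hodd_a
    exact ⟨⟨hodd_a, hodd_b⟩, Nat.div_self hL0⟩

open scoped Classical in
theorem stmt_17_general (μ : ℕ → ℤ) (h1 : μ 1 = 1)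
    (hrec : ∀ n : ℕ, 1 < n →
      ∑ d ∈ n.divisors, (∑ i ∈ Finset.range (n / d), (-1 : ℤ) ^ i) * μ d = 0)
    (n i j : ℕ) (hi : i ∣ n) (hj : j ∣ n) :
    ∑ e ∈ (n / Nat.lcm i j).divisors,
        (∑ k ∈ Finset.range (n / (e * i)), (-1 : ℤ) ^ k)
          * (∑ k ∈ Finset.range (n / (e * j)), (-1 : ℤ) ^ k) * μ e
      = if Odd (n / i) ∧ Odd (n / j) ∧ Nat.lcm i j = n then 1 else 0 := by
  set L := Nat.lcm i j
  have hLn : L ∣ n := Nat.lcm_dvd hi hj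
  calc _ = ∑ e ∈ (n / L).divisors, (if Odd (L / i) ∧ Odd (L / j) then 1 else 0)
          * ((∑ k ∈ range (n / L / e), (-1 : ℤ) ^ k) * μ e) := by
        refine sum_congr rfl fun e he => ?_
        have heM := Nat.dvd_of_mem_divisors he
        rw [div_mul_eq_div_div_mul_div hLn heM (Nat.dvd_lcm_left i j),
          div_mul_eq_div_div_mul_div hLn heM (Nat.dvd_lcm_right i j), geom_sum_neg_one_mul_mul,
          mul_assoc]
    _ = (if Odd (L / i) ∧ Odd (L / j) then 1 else 0) * (if n / L = 1 then 1 else 0) := by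
        rw [← mul_sum, sum_divisors_neg_one_geom_sum_mul_eq_ite μ h1 hrec]
    _ = _ := by
        rw [ite_zero_mul_ite_zero, mul_one]
        exact if_congr (odd_div_and_div_eq_one_iff hLn) rfl rfl

open scoped Classical in
theorem stmt_17 (μ : ℕ → ℤ) (h1 : μ 1 = 1)
    (hrec : ∀ n : ℕ, 1 < n →
      ∑ d ∈ n.divisors, (∑ i ∈ Finset.range (n / d), (-1 : ℤ) ^ i) * μ d = 0)
    (n i j : ℕ) (hn : 0 < n) (hi : i ∣ n) (hj : j ∣ n) :
    ∑ e ∈ (n / Nat.lcm i j).divisors,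
        (∑ k ∈ Finset.range (n / (e * i)), (-1 : ℤ) ^ k)
          * (∑ k ∈ Finset.range (n / (e * j)), (-1 : ℤ) ^ k) * μ e
      = if Odd (n / i) ∧ Odd (n / j) ∧ Nat.lcm i j = n then 1 else 0 :=
  stmt_17_general μ h1 hrec n i j hi hj
end

section
/- Let m ≠ 1 be an integer, r ≥ 1, and for each n ≥ 1 define R_n ∈ ℚ by the recursion ∑_{d ∣ n} d·[n/d]_m·R_d = ∑_{e ∣ n·r} e·[n·r/e]_m · x_e, solved formally in ℚ ⊗ ℤ[x_e : e ≥ 1] (treating x_e as commuting indeterminates and with no Ψ-operations, i.e., Ψ = id). Then n·R_n = ∑_{e ∣ n·r} e·(∑_{d ∣ gcd(n, n·r/e)} μ_m(d)·[n·r/(d·e)]_m)·x_e, and in particular for each e ∣ n·r the integer e·∑_{d ∣ gcd(n, nr/e)} μ_m(d)·[nr/(de)]_m is divisible by n when m = 0, where it equals e if lcm(r, e) = n·r and 0 otherwise. -/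
/-!
Since `μ_m` is the Dirichlet inverse of `k ↦ [k]_m`, the recursion, read as the Dirichlet
convolution of `k ↦ [k]_m` with `d ↦ d • R_d`, inverts to
`n R_n = ∑_{d ∣ n} μ_m(d) G(n/d)`, where `G(k) = ∑_{e ∣ kr} e [kr/e]_m x_e`. The pairs `(d, e)`
with `d ∣ n` and `e ∣ (n/d) r` are exactly those with `e ∣ nr` and `d ∣ gcd(n, nr/e)`, which
gives the formula after exchanging the two sums. For `m = 0` every `[k]_0` is `1`, so the
coefficient of `x_e` is `e ∑_{d ∣ g} μ(d) = e [g = 1]` with `g = gcd(n, nr/e)`, and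
`g · lcm(r, e) = nr`.
-/

open Finset

namespace ArithmeticFunction

def ofPos {R : Type*} [Zero R] (f : ℕ → R) : ArithmeticFunction R :=
  ⟨fun n => if n = 0 then 0 else f n, if_pos rfl⟩

section

variable {R M : Type*}

theorem ofPos_apply [Zero R] (f : ℕ → R) {n : ℕ} (hn : n ≠ 0) : ofPos f n = f n :=
  if_neg hn

variable [Zero R] [AddCommMonoid M] [SMul R M]

theorem ofPos_smul_ofPos_apply (u : ℕ → R) (v : ℕ → M) (n : ℕ) :
    (ofPos u • ofPos v) n = ∑ d ∈ n.divisors, u d • v (n / d) := by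
  rw [smul_apply, Nat.sum_divisorsAntidiagonal (fun x y => ofPos u x • ofPos v y)]
  refine sum_congr rfl fun d hd => ?_
  rw [ofPos_apply u (Nat.pos_of_mem_divisors hd).ne',
    ofPos_apply v (Nat.div_pos (Nat.divisor_le hd) (Nat.pos_of_mem_divisors hd)).ne']

theorem ofPos_smul_ofPos_apply' (u : ℕ → R) (v : ℕ → M) (n : ℕ) :
    (ofPos u • ofPos v) n = ∑ d ∈ n.divisors, u (n / d) • v d := by
  rw [smul_apply, Nat.sum_divisorsAntidiagonal' (fun x y => ofPos u x • ofPos v y)]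
  refine sum_congr rfl fun d hd => ?_
  rw [ofPos_apply v (Nat.pos_of_mem_divisors hd).ne',
    ofPos_apply u (Nat.div_pos (Nat.divisor_le hd) (Nat.pos_of_mem_divisors hd)).ne']

end

theorem sum_divisors_smul_inversion {R M : Type*} [Semiring R] [AddCommMonoid M] [Module R M]
    {a μ : ℕ → R}
    (hinv : ∀ n ≠ 0, ∑ d ∈ n.divisors, μ d * a (n / d) = if n = 1 then 1 else 0)
    {f g : ℕ → M} (hfg : ∀ n ≠ 0, ∑ d ∈ n.divisors, a (n / d) • f d = g n)
    {n : ℕ} (hn : n ≠ 0) :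
    ∑ d ∈ n.divisors, μ d • g (n / d) = f n := by
  have hμa : ofPos μ * ofPos a = 1 := by
    ext k
    rcases eq_or_ne k 0 with rfl | hk
    · simp
    · exact (ofPos_smul_ofPos_apply μ a k).trans ((hinv k hk).trans one_apply.symm)
  have haf : ofPos a • ofPos f = ofPos g := by
    ext k
    rcases eq_or_ne k 0 with rfl | hk
    · simp
    · rw [ofPos_smul_ofPos_apply' a f k, ofPos_apply g hk, hfg k hk]
  rw [← ofPos_apply f hn, ← ofPos_smul_ofPos_apply μ g n, ← haf, ← mul_smul', hμa,
    one_smul']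

end ArithmeticFunction

theorem sum_divisors_mul_div_eq_ite {R : Type*} [CommSemiring R] {a μ : ℕ → R}
    (ha : a 1 = 1) (hμ1 : μ 1 = 1)
    (hμ : ∀ n : ℕ, 1 < n → ∑ d ∈ n.divisors, a (n / d) * μ d = 0)
    {n : ℕ} (hn : n ≠ 0) :
    ∑ d ∈ n.divisors, μ d * a (n / d) = if n = 1 then 1 else 0 := by
  rcases eq_or_ne n 1 with rfl | hn1
  · simp [ha, hμ1]
  · rw [if_neg hn1, ← hμ n (by omega)]
    exact sum_congr rfl fun d _ => mul_comm _ _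

theorem Nat.sum_divisors_sum_divisors_div_mul {M : Type*} [AddCommMonoid M] (n r : ℕ)
    (F : ℕ → ℕ → M) :
    ∑ d ∈ n.divisors, ∑ e ∈ (n / d * r).divisors, F d e
      = ∑ e ∈ (n * r).divisors, ∑ d ∈ (n.gcd (n * r / e)).divisors, F d e := by
  refine sum_comm' fun d e => ?_
  simp only [Nat.mem_divisors, Nat.dvd_gcd_iff]
  constructor
  · rintro ⟨⟨hdn, hn⟩, hed, hnr⟩
    rw [Nat.div_mul_right_comm hdn] at hed hnr
    have hde : d * e ∣ n * r := (Nat.dvd_div_iff_mul_dvd (hdn.mul_right r)).1 hed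
    have he : e ∣ n * r := (dvd_mul_left e d).trans hde
    have hde' : d ∣ n * r / e := (Nat.dvd_div_iff_mul_dvd he).2 (by rwa [mul_comm])
    exact ⟨⟨⟨hdn, hde'⟩, Nat.gcd_ne_zero_left hn⟩, he, fun h => hnr (by simp [h])⟩
  · rintro ⟨⟨⟨hdn, hde⟩, -⟩, he, hnr⟩
    have hn : n ≠ 0 := fun h => hnr (by simp [h])
    rw [Nat.div_mul_right_comm hdn]
    refine ⟨⟨hdn, hn⟩, (Nat.dvd_div_iff_mul_dvd (hdn.mul_right r)).2 ?_, ?_⟩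
    · rw [mul_comm]; exact (Nat.dvd_div_iff_mul_dvd he).1 hde
    · exact (Nat.div_ne_zero_iff_of_dvd (hdn.mul_right r)).2
        ⟨hnr, ne_zero_of_dvd_ne_zero hn hdn⟩

theorem Nat.gcd_div_mul_eq {n r e : ℕ} (he : e ∣ n * r) :
    n.gcd (n * r / e) * e = n * e.gcd r := by
  rw [← Nat.gcd_mul_right, Nat.div_mul_cancel he, Nat.gcd_mul_left]

theorem Nat.gcd_div_mul_lcm {n r e : ℕ} (he : e ∣ n * r) :
    n.gcd (n * r / e) * r.lcm e = n * r := by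
  rcases eq_or_ne (r.gcd e) 0 with h | h
  · simp [(Nat.gcd_eq_zero_iff.1 h).1]
  · apply Nat.eq_of_mul_eq_mul_right (Nat.pos_of_ne_zero h)
    calc n.gcd (n * r / e) * r.lcm e * r.gcd e = n.gcd (n * r / e) * e * r := by
          rw [mul_assoc, mul_comm (r.lcm e), Nat.gcd_mul_lcm]; ring
      _ = n * r * r.gcd e := by rw [Nat.gcd_div_mul_eq he, Nat.gcd_comm]; ring

theorem Nat.gcd_div_eq_one_iff {n r e : ℕ} (he : e ∣ n * r) (hnr : n * r ≠ 0) :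
    n.gcd (n * r / e) = 1 ↔ r.lcm e = n * r := by
  have key := Nat.gcd_div_mul_lcm he
  constructor
  · intro h; rwa [h, one_mul] at key
  · intro h; rw [h] at key; exact (Nat.mul_eq_right hnr).1 key

open MvPolynomial in
theorem C_natCast_mul_eq_sum_gcd_divisors {K : Type*} [CommRing K] {a μ : ℕ → K}
    (hinv : ∀ n ≠ 0, ∑ d ∈ n.divisors, μ d * a (n / d) = if n = 1 then 1 else 0)
    (r : ℕ) {R : ℕ → MvPolynomial ℕ K}
    (hR : ∀ n : ℕ, n ≠ 0 → ∑ d ∈ n.divisors, C ((d : K) * a (n / d)) * R d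
      = ∑ e ∈ (n * r).divisors, C ((e : K) * a (n * r / e)) * X e) (n : ℕ) :
    C (n : K) * R n = ∑ e ∈ (n * r).divisors,
      C ((e : K) * ∑ d ∈ (n.gcd (n * r / e)).divisors, μ d * a (n * r / (d * e))) * X e := by
  rcases eq_or_ne n 0 with rfl | hn
  · simp
  have hfg : ∀ k ≠ 0, ∑ d ∈ k.divisors, a (k / d) • (C (↑d : K) * R d)
      = ∑ e ∈ (k * r).divisors, C ((e : K) * a (k * r / e)) * X e := fun k hk => by
    rw [← hR k hk]
    refine sum_congr rfl fun d _ => ?_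
    rw [smul_eq_C_mul, ← mul_assoc, ← map_mul, mul_comm (a _)]
  rw [← ArithmeticFunction.sum_divisors_smul_inversion hinv hfg hn]
  calc ∑ d ∈ n.divisors, μ d •
        ∑ e ∈ (n / d * r).divisors, C ((e : K) * a (n / d * r / e)) * X e
      = ∑ d ∈ n.divisors, ∑ e ∈ (n / d * r).divisors,
          C ((e : K) * (μ d * a (n * r / (d * e)))) * X e := by
        refine sum_congr rfl fun d hd => ?_
        rw [smul_sum]
        refine sum_congr rfl fun e _ => ?_
        rw [smul_eq_C_mul, ← mul_assoc, ← map_mul,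
          Nat.div_mul_right_comm (Nat.dvd_of_mem_divisors hd), Nat.div_div_eq_div_mul,
          mul_left_comm]
    _ = ∑ e ∈ (n * r).divisors, ∑ d ∈ (n.gcd (n * r / e)).divisors,
          C ((e : K) * (μ d * a (n * r / (d * e)))) * X e :=
        Nat.sum_divisors_sum_divisors_div_mul n r _
    _ = _ := sum_congr rfl fun e _ => by rw [← sum_mul, ← map_sum, mul_sum]

theorem sum_gcd_divisors_mul_zero_geom_sum_eq_ite {R : Type*} [CommSemiring R] {μ : ℕ → R}
    (hinv : ∀ k ≠ 0, ∑ d ∈ k.divisors, μ d * ∑ i ∈ range (k / d), (0 : R) ^ i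
      = if k = 1 then 1 else 0)
    {n r e : ℕ} (hmem : e ∈ (n * r).divisors) :
    ∑ d ∈ (n.gcd (n * r / e)).divisors, μ d * ∑ i ∈ range (n * r / (d * e)), (0 : R) ^ i
      = if r.lcm e = n * r then 1 else 0 := by
  obtain ⟨he, hnr⟩ := Nat.mem_divisors.1 hmem
  have hg : n.gcd (n * r / e) ≠ 0 := Nat.gcd_ne_zero_left (left_ne_zero_of_mul hnr)
  rw [← if_congr (Nat.gcd_div_eq_one_iff he hnr) rfl rfl, ← hinv _ hg]
  refine sum_congr rfl fun d hd => ?_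
  have hdg : d ∣ n.gcd (n * r / e) := Nat.dvd_of_mem_divisors hd
  have hde : d * e ∣ n * r := by
    rw [mul_comm]
    exact (Nat.dvd_div_iff_mul_dvd he).1 (hdg.trans (Nat.gcd_dvd_right _ _))
  rw [zero_geom_sum, zero_geom_sum,
    if_neg ((Nat.div_ne_zero_iff_of_dvd hde).2 ⟨hnr, ne_zero_of_dvd_ne_zero hnr hde⟩),
    if_neg ((Nat.div_ne_zero_iff_of_dvd hdg).2 ⟨hg, ne_zero_of_dvd_ne_zero hg hdg⟩)]

theorem Nat.dvd_of_lcm_eq_mul {n r e : ℕ} (hr : r ≠ 0) (h : r.lcm e = n * r) : n ∣ e := by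
  refine ⟨r.gcd e, Nat.eq_of_mul_eq_mul_left (Nat.pos_of_ne_zero hr) ?_⟩
  rw [← Nat.gcd_mul_lcm r e, h]; ring

theorem stmt_19_general (m : ℤ) (r : ℕ) (μ : ℕ → ℤ) (hμ1 : μ 1 = 1)
    (hμ : ∀ n : ℕ, 1 < n →
      ∑ d ∈ n.divisors, (∑ i ∈ Finset.range (n / d), m ^ i) * μ d = 0)
    (Rn : ℕ → MvPolynomial ℕ ℚ)
    (hR : ∀ n : ℕ, 1 ≤ n →
      ∑ d ∈ n.divisors,
          MvPolynomial.C ((d : ℚ) * ∑ i ∈ Finset.range (n / d), (m : ℚ) ^ i) * Rn d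
        = ∑ e ∈ (n * r).divisors,
            MvPolynomial.C ((e : ℚ) * ∑ i ∈ Finset.range (n * r / e), (m : ℚ) ^ i)
              * MvPolynomial.X e)
    (n : ℕ) :
    (MvPolynomial.C (n : ℚ) * Rn n
      = ∑ e ∈ (n * r).divisors,
          MvPolynomial.C ((e : ℚ) * ∑ d ∈ (Nat.gcd n (n * r / e)).divisors,
              (μ d : ℚ) * ∑ i ∈ Finset.range (n * r / (d * e)), (m : ℚ) ^ i)
            * MvPolynomial.X e) ∧
    (m = 0 → ∀ e ∈ (n * r).divisors,
      ((n : ℤ) ∣ (e : ℤ) * ∑ d ∈ (Nat.gcd n (n * r / e)).divisors,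
          μ d * ∑ i ∈ Finset.range (n * r / (d * e)), m ^ i) ∧
      (e : ℤ) * ∑ d ∈ (Nat.gcd n (n * r / e)).divisors,
          μ d * ∑ i ∈ Finset.range (n * r / (d * e)), m ^ i
        = if Nat.lcm r e = n * r then (e : ℤ) else 0) := by
  let a : ℕ → ℚ := fun k => ∑ i ∈ range k, (m : ℚ) ^ i
  have hinvℚ (k : ℕ) (hk : k ≠ 0) : ∑ d ∈ k.divisors, (μ d : ℚ) * a (k / d)
      = if k = 1 then 1 else 0 :=
    sum_divisors_mul_div_eq_ite (by simp [a]) (by simp [hμ1]) (fun k hk => by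
      simpa [a] using congrArg (Int.cast : ℤ → ℚ) (hμ k hk)) hk
  refine ⟨C_natCast_mul_eq_sum_gcd_divisors hinvℚ r
    (fun k hk => hR k (Nat.one_le_iff_ne_zero.2 hk)) n, ?_⟩
  rintro rfl e he
  have hinv (k : ℕ) (hk : k ≠ 0) : ∑ d ∈ k.divisors, μ d * ∑ i ∈ range (k / d), (0 : ℤ) ^ i
      = if k = 1 then 1 else 0 :=
    sum_divisors_mul_div_eq_ite (a := fun k => ∑ i ∈ range k, (0 : ℤ) ^ i) (by simp) hμ1 hμ hk
  rw [sum_gcd_divisors_mul_zero_geom_sum_eq_ite hinv he, mul_ite, mul_one, mul_zero]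
  refine ⟨?_, rfl⟩
  split_ifs with h
  · have hr : r ≠ 0 := right_ne_zero_of_mul (Nat.mem_divisors.1 he).2
    exact Int.natCast_dvd_natCast.2 (Nat.dvd_of_lcm_eq_mul hr h)
  · exact dvd_zero _

theorem stmt_19 (m : ℤ) (hm : m ≠ 1) (r : ℕ) (hr : 1 ≤ r)
    (μ : ℕ → ℤ) (hμ1 : μ 1 = 1)
    (hμ : ∀ n : ℕ, 1 < n →
      ∑ d ∈ n.divisors, (∑ i ∈ Finset.range (n / d), m ^ i) * μ d = 0)
    (Rn : ℕ → MvPolynomial ℕ ℚ)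
    (hR : ∀ n : ℕ, 1 ≤ n →
      ∑ d ∈ n.divisors,
          MvPolynomial.C ((d : ℚ) * ∑ i ∈ Finset.range (n / d), (m : ℚ) ^ i) * Rn d
        = ∑ e ∈ (n * r).divisors,
            MvPolynomial.C ((e : ℚ) * ∑ i ∈ Finset.range (n * r / e), (m : ℚ) ^ i)
              * MvPolynomial.X e)
    (n : ℕ) (hn : 1 ≤ n) :
    (MvPolynomial.C (n : ℚ) * Rn n
      = ∑ e ∈ (n * r).divisors,
          MvPolynomial.C ((e : ℚ) * ∑ d ∈ (Nat.gcd n (n * r / e)).divisors,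
              (μ d : ℚ) * ∑ i ∈ Finset.range (n * r / (d * e)), (m : ℚ) ^ i)
            * MvPolynomial.X e) ∧
    (m = 0 → ∀ e ∈ (n * r).divisors,
      ((n : ℤ) ∣ (e : ℤ) * ∑ d ∈ (Nat.gcd n (n * r / e)).divisors,
          μ d * ∑ i ∈ Finset.range (n * r / (d * e)), m ^ i) ∧
      (e : ℤ) * ∑ d ∈ (Nat.gcd n (n * r / e)).divisors,
          μ d * ∑ i ∈ Finset.range (n * r / (d * e)), m ^ i
        = if Nat.lcm r e = n * r then (e : ℤ) else 0) :=
  stmt_19_general m r μ hμ1 hμ Rn hR n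
end
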